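/- arXiv:2409.14251 — 4 statements merged into one kernel-verified Lean document; each statement's English description precedes it below -/
import Mathlib

section
/- Let (R, m) be a Noetherian local ring and let I and J be proper ideals of R, each having finite Łojasiewicz exponent. Then I·J has finite Łojasiewicz exponent and 𝓛₀(I·J) ≤ 𝓛₀(I) + 𝓛₀(J). -/
open Finset IsLocalRing

/-- The set of elements integral over an ideal `I`: `x` is integral over `I` if it satisfies
an equation `x ^ k + c 1 * x ^ (k-1) + ⋯ + c k = 0` with `c i ∈ I ^ i`. -/
def integralClosureIdeal {R : Type*} [CommRing R] (I : Ideal R) : Set R :=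
  {x | ∃ k : ℕ, 1 ≤ k ∧ ∃ c : ℕ → R, (∀ i, 1 ≤ i → i ≤ k → c i ∈ I ^ i) ∧
    x ^ k + ∑ i ∈ Finset.Icc 1 k, c i * x ^ (k - i) = 0}

/-- `Λ(I)`: the set of rationals `r/s` (as real numbers) with `r, s` positive integers such that
`m ^ r` is contained in the integral closure of `I ^ s`. -/
def Lambda (R : Type*) [CommRing R] [IsLocalRing R] (I : Ideal R) : Set ℝ :=
  {x | ∃ r s : ℕ, 0 < r ∧ 0 < s ∧
    ((maximalIdeal R ^ r : Ideal R) : Set R) ⊆ integralClosureIdeal (I ^ s) ∧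
    x = (r : ℝ) / (s : ℝ)}

/-- The Łojasiewicz exponent `𝓛₀(I)`, the infimum of `Λ(I)`. -/
noncomputable def Loj (R : Type*) [CommRing R] [IsLocalRing R] (I : Ideal R) : ℝ :=
  sInf (Lambda R I)

/-!
From `m ^ r ⊆ cl(I ^ s)` and `m ^ r' ⊆ cl(J ^ s')` we get
`m ^ (r s' + r' s) ⊆ cl((I J) ^ (s s'))`, so `Λ(I) + Λ(J) ⊆ Λ(I J)` and the infima add.

The inclusion rests on the determinant trick. If a finitely generated ideal `A` is integral over
`K`, there is an ideal `M ⊇ K ^ D` with `A M ⊆ K M`: for a single generator `x` with an integral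
equation of degree `d + 1`, take `M = (K + (x)) ^ d`, and take products of such `M` for sums.
Conversely, if `z P ⊆ L P` for a finitely generated `P` containing a power `z ^ m`,
Cayley–Hamilton for multiplication by `z` on `P` gives a monic `p` with coefficients in powers
of `L` and `p(z) z ^ m = 0`, an integral equation of `z` over `L`.
-/

open scoped Pointwise
open Polynomial

namespace Ideal

variable {R : Type*} [CommRing R]

theorem add_pow_succ_le (A B : Ideal R) (n : ℕ) :
    (A + B) ^ (n + 1) ≤ A * (A + B) ^ n + B ^ (n + 1) := by
  induction n with
  | zero => simp
  | succ n ih =>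
    calc (A + B) ^ (n + 2) = (A + B) * (A + B) ^ (n + 1) := by ring
      _ ≤ (A + B) * (A * (A + B) ^ n + B ^ (n + 1)) := mul_mono_right ih
      _ = A * (A + B) ^ (n + 1) + A * B ^ (n + 1) + B ^ (n + 2) := by ring
      _ ≤ A * (A + B) ^ (n + 1) + B ^ (n + 2) := by
          gcongr ?_ + _
          exact sup_le le_rfl (mul_mono_right (pow_le_pow_left' le_sup_right _))

theorem pow_mul_le_pow_mul_of_mul_le {A B M : Ideal R} (h : A * M ≤ B * M) (n : ℕ) :
    A ^ n * M ≤ B ^ n * M := by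
  induction n with
  | zero => simp
  | succ n ih =>
    calc A ^ (n + 1) * M = A ^ n * (A * M) := by ring
      _ ≤ A ^ n * (B * M) := mul_mono_right h
      _ = B * (A ^ n * M) := by ring
      _ ≤ B * (B ^ n * M) := mul_mono_right ih
      _ = B ^ (n + 1) * M := by ring

end Ideal

section IntegralClosureIdeal

variable {R : Type*} [CommRing R]

open Ideal

theorem exists_pow_succ_mem_mul_pow_of_mem_integralClosureIdeal {I : Ideal R} {x : R}
    (hx : x ∈ integralClosureIdeal I) : ∃ d : ℕ, x ^ (d + 1) ∈ I * (I + span {x}) ^ d := by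
  obtain ⟨k, hk, c, hc, heq⟩ := hx
  obtain ⟨d, rfl⟩ : ∃ d, k = d + 1 := ⟨k - 1, by omega⟩
  refine ⟨d, ?_⟩
  rw [eq_neg_of_add_eq_zero_left heq]
  refine neg_mem (sum_mem fun i hi => ?_)
  obtain ⟨hi1, hid⟩ := Finset.mem_Icc.mp hi
  obtain ⟨j, rfl⟩ : ∃ j, i = j + 1 := ⟨i - 1, by omega⟩
  have hc' : c (j + 1) ∈ I * (I + span {x}) ^ j := by
    have := hc _ hi1 hid
    rw [pow_succ'] at this
    exact mul_mono_right (pow_le_pow_left' le_sup_left j) this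
  have hx' : x ^ (d + 1 - (j + 1)) ∈ (I + span {x}) ^ (d - j) := by
    rw [show d + 1 - (j + 1) = d - j by omega]
    exact pow_mem_pow (Submodule.mem_sup_right (mem_span_singleton_self x)) _
  have := mul_mem_mul hc' hx'
  rwa [mul_assoc, ← pow_add, show j + (d - j) = d by omega] at this

theorem exists_span_singleton_mul_le_of_mem_integralClosureIdeal {I : Ideal R} {x : R}
    (hx : x ∈ integralClosureIdeal I) :
    ∃ d : ℕ, span {x} * (I + span {x}) ^ d ≤ I * (I + span {x}) ^ d := by
  obtain ⟨d, hd⟩ := exists_pow_succ_mem_mul_pow_of_mem_integralClosureIdeal hx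
  refine ⟨d, ?_⟩
  calc span {x} * (I + span {x}) ^ d ≤ (I + span {x}) ^ (d + 1) := by
        rw [pow_succ']
        exact mul_mono_left le_sup_right
    _ ≤ I * (I + span {x}) ^ d + span {x} ^ (d + 1) := add_pow_succ_le _ _ d
    _ ≤ I * (I + span {x}) ^ d := by
        refine sup_le le_rfl ?_
        rwa [span_singleton_pow, span_singleton_le_iff_mem]

theorem exists_pow_add_mem_pow_of_mem_integralClosureIdeal {I : Ideal R} {x : R}
    (hx : x ∈ integralClosureIdeal I) : ∃ d : ℕ, ∀ n, x ^ (n + d) ∈ I ^ n := by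
  obtain ⟨d, hd⟩ := exists_span_singleton_mul_le_of_mem_integralClosureIdeal hx
  refine ⟨d, fun n => mul_le_left (pow_mul_le_pow_mul_of_mul_le hd n ?_)⟩
  rw [pow_add]
  exact mul_mem_mul (pow_mem_pow (mem_span_singleton_self x) n)
    (pow_mem_pow (Submodule.mem_sup_right (mem_span_singleton_self x)) d)

theorem exists_mul_le_mul_of_subset_integralClosureIdeal {A K : Ideal R} (hA : A.FG)
    (h : (A : Set R) ⊆ integralClosureIdeal K) :
    ∃ (M : Ideal R) (D : ℕ), A * M ≤ K * M ∧ K ^ D ≤ M := by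
  induction A, hA using Submodule.fg_induction with
  | singleton x =>
    obtain ⟨d, hd⟩ :=
      exists_span_singleton_mul_le_of_mem_integralClosureIdeal (h (mem_span_singleton_self x))
    exact ⟨_, d, hd, pow_le_pow_left' le_sup_left d⟩
  | sup A₁ A₂ _ _ ih₁ ih₂ =>
    obtain ⟨M₁, D₁, hM₁, hD₁⟩ := ih₁ ((SetLike.coe_subset_coe.2 le_sup_left).trans h)
    obtain ⟨M₂, D₂, hM₂, hD₂⟩ := ih₂ ((SetLike.coe_subset_coe.2 le_sup_right).trans h)
    refine ⟨M₁ * M₂, D₁ + D₂, ?_, pow_add K D₁ D₂ ▸ mul_mono hD₁ hD₂⟩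
    rw [Ideal.sup_mul]
    refine sup_le ?_ ?_
    · calc A₁ * (M₁ * M₂) = A₁ * M₁ * M₂ := (mul_assoc _ _ _).symm
        _ ≤ K * M₁ * M₂ := mul_mono_left hM₁
        _ = K * (M₁ * M₂) := mul_assoc _ _ _
    · calc A₂ * (M₁ * M₂) = M₁ * (A₂ * M₂) := by ring
        _ ≤ M₁ * (K * M₂) := mul_mono_right hM₂
        _ = K * (M₁ * M₂) := by ring

theorem mem_integralClosureIdeal_of_monic {L : Ideal R} {z : R} {p : R[X]} (hp : p.Monic)
    (hdeg : 0 < p.natDegree) (hcoeff : ∀ i, p.coeff i ∈ L ^ (p.natDegree - i))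
    (hz : p.eval z = 0) : z ∈ integralClosureIdeal L := by
  set k := p.natDegree
  refine ⟨k, hdeg, fun i => p.coeff (k - i),
    fun i _ hik => by simpa [Nat.sub_sub_self hik] using hcoeff (k - i), ?_⟩
  have hsum :
      ∑ i ∈ Icc 1 k, p.coeff (k - i) * z ^ (k - i) = ∑ i ∈ range k, p.coeff i * z ^ i := by
    rw [← Finset.Ico_add_one_right_eq_Icc, sum_Ico_reflect (fun i => p.coeff i * z ^ i) 1 le_rfl]
    simp
  rw [hsum, ← hz, eval_eq_sum_range, sum_range_succ, hp.coeff_natDegree, one_mul, add_comm]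

theorem mem_integralClosureIdeal_of_span_singleton_mul_le {L P : Ideal R} (hP : P.FG)
    {z : R} {m : ℕ} (hzm : z ^ m ∈ P) (hmul : span {z} * P ≤ L * P) :
    z ∈ integralClosureIdeal L := by
  rcases subsingleton_or_nontrivial R with _ | _
  · exact ⟨1, le_rfl, 0, fun _ _ _ => zero_mem _, Subsingleton.elim _ _⟩
  have : Module.Finite R P := Module.Finite.iff_fg.mpr hP
  let f : Module.End R P := algebraMap R _ z
  have hrange : LinearMap.range f ≤ L • ⊤ := by
    rintro _ ⟨v, rfl⟩
    rw [Submodule.mem_smul_top_iff, Module.algebraMap_end_apply, smul_eq_mul]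
    exact hmul (mul_mem_mul (mem_span_singleton_self z) v.2)
  obtain ⟨p, hp, -, hcoeff, hpf⟩ :=
    LinearMap.exists_monic_and_natDegree_eq_and_coeff_mem_pow_and_aeval_eq_zero R f L hrange
  have hpz : p.eval z * z ^ m = 0 := by
    have := congr(($hpf) ⟨z ^ m, hzm⟩)
    rw [aeval_algebraMap_apply_eq_algebraMap_eval, Module.algebraMap_end_apply] at this
    simpa using congr(Subtype.val $this)
  -- `z ^ (m + 1) * p(z) = 0` is an equation of integral dependence of positive degree.
  have hdeg : (X ^ (m + 1) * p).natDegree = p.natDegree + (m + 1) :=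
    natDegree_X_pow_mul (n := m + 1) hp.ne_zero
  refine mem_integralClosureIdeal_of_monic ((monic_X_pow _).mul hp) (by rw [hdeg]; omega)
    (fun i => ?_) ?_
  · rw [coeff_X_pow_mul', hdeg]
    split_ifs with hi
    · simpa [show p.natDegree + (m + 1) - i = p.natDegree - (i - (m + 1)) by omega]
        using hcoeff (i - (m + 1))
    · exact zero_mem _
  · rw [eval_mul, eval_pow, eval_X, pow_succ, mul_comm, ← mul_assoc, hpz, zero_mul]

theorem pow_mul_pow_subset_integralClosureIdeal [IsNoetherianRing R] {A B K L : Ideal R}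
    (hA : (A : Set R) ⊆ integralClosureIdeal K)
    (hB : (B : Set R) ⊆ integralClosureIdeal L) {a b : ℕ} (ha : 0 < a) (hb : 0 < b) :
    ((A ^ a * B ^ b : Ideal R) : Set R) ⊆ integralClosureIdeal (K ^ a * L ^ b) := by
  intro z hz
  obtain ⟨M, D, hAM, hKM⟩ :=
    exists_mul_le_mul_of_subset_integralClosureIdeal (IsNoetherian.noetherian A) hA
  obtain ⟨N, E, hBN, hLN⟩ :=
    exists_mul_le_mul_of_subset_integralClosureIdeal (IsNoetherian.noetherian B) hB
  obtain ⟨d, hd⟩ := exists_pow_add_mem_pow_of_mem_integralClosureIdeal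
    (hA (pow_le_self ha.ne' (mul_le_left hz)))
  obtain ⟨e, he⟩ := exists_pow_add_mem_pow_of_mem_integralClosureIdeal
    (hB (pow_le_self hb.ne' (mul_le_right hz)))
  have hpow : z ^ ((D + d) + (E + e)) ∈ M * N := by
    rw [pow_add]
    exact mul_mem_mul (hKM (hd D)) (hLN (he E))
  refine mem_integralClosureIdeal_of_span_singleton_mul_le (IsNoetherian.noetherian _) hpow ?_
  calc span {z} * (M * N) ≤ A ^ a * B ^ b * (M * N) :=
        mul_mono_left ((span_singleton_le_iff_mem _).2 hz)
    _ = (A ^ a * M) * (B ^ b * N) := by ring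
    _ ≤ (K ^ a * M) * (L ^ b * N) :=
        mul_mono (pow_mul_le_pow_mul_of_mul_le hAM a) (pow_mul_le_pow_mul_of_mul_le hBN b)
    _ = K ^ a * L ^ b * (M * N) := by ring

end IntegralClosureIdeal

section Lojasiewicz

variable {R : Type*} [CommRing R] [IsLocalRing R]

theorem bddBelow_Lambda (I : Ideal R) : BddBelow (Lambda R I) :=
  ⟨0, by rintro _ ⟨r, s, -, -, -, rfl⟩; positivity⟩

theorem Lambda_add_subset_Lambda_mul [IsNoetherianRing R] (I J : Ideal R) :
    Lambda R I + Lambda R J ⊆ Lambda R (I * J) := by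
  rintro _ ⟨_, ⟨r, s, hr, hs, hI, rfl⟩, _, ⟨r', s', -, hs', hJ, rfl⟩, rfl⟩
  refine ⟨r * s' + r' * s, s * s', by positivity, by positivity, ?_, ?_⟩
  · rw [pow_add, pow_mul, pow_mul, mul_pow, pow_mul I, pow_mul' J]
    exact pow_mul_pow_subset_integralClosureIdeal hI hJ hs' hs
  · push_cast
    field_simp

end Lojasiewicz

theorem loj_mul_le_add_general
    {R : Type*} [CommRing R] [IsNoetherianRing R] [IsLocalRing R]
    (I J : Ideal R)
    (hIfin : (Lambda R I).Nonempty) (hJfin : (Lambda R J).Nonempty) :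
    (Lambda R (I * J)).Nonempty ∧ Loj R (I * J) ≤ Loj R I + Loj R J := by
  have hsub := Lambda_add_subset_Lambda_mul I J
  refine ⟨(hIfin.add hJfin).mono hsub, ?_⟩
  calc Loj R (I * J) ≤ sInf (Lambda R I + Lambda R J) :=
        csInf_le_csInf (bddBelow_Lambda _) (hIfin.add hJfin) hsub
    _ = Loj R I + Loj R J := csInf_add hIfin (bddBelow_Lambda I) hJfin (bddBelow_Lambda J)

theorem loj_mul_le_add
    {R : Type*} [CommRing R] [IsNoetherianRing R] [IsLocalRing R]
    (I J : Ideal R) (hI : I ≠ ⊤) (hJ : J ≠ ⊤)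
    (hIfin : (Lambda R I).Nonempty) (hJfin : (Lambda R J).Nonempty) :
    (Lambda R (I * J)).Nonempty ∧ Loj R (I * J) ≤ Loj R I + Loj R J :=
  loj_mul_le_add_general I J hIfin hJfin
end

section
/- Let (R, m) be a Noetherian local domain with m ≠ 0 and let I be a proper ideal of R. If p ≥ q ≥ 1 are integers such that m^p is contained in the integral closure of (m·I)^q, then m^(p−q) is contained in the integral closure of I^q. -/
open Finset IsLocalRing

/-! Writing `(m I) ^ q = I ^ q m ^ q` and `m ^ p = m ^ (p - q) m ^ q`, the theorem is an instance of
cancellation: if `K N` is integral over `J N` for a nonzero ideal `N` of a Noetherian domain, then `K`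
is integral over `J`. Integrality of the finitely generated `K N` over `J N` makes `J N` a reduction
of `L = J N + K N`, i.e. `L ^ (n + 1) ⊆ J N L ^ n` for some `n`. For `x ∈ K` the nonzero ideal
`N L ^ n` then satisfies `x N L ^ n ⊆ L ^ (n + 1) ⊆ J N L ^ n`, and the determinant trick makes `x`
integral over `J`. -/

open Ideal Polynomial

section

variable {R : Type*} [CommRing R]

theorem zero_mem_integralClosureIdeal (J : Ideal R) : (0 : R) ∈ integralClosureIdeal J :=
  ⟨1, le_rfl, 0, fun _ _ _ => zero_mem _, by simp⟩

theorem integralClosureIdeal_mono {J J' : Ideal R} (h : J ≤ J') :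
    integralClosureIdeal J ⊆ integralClosureIdeal J' := by
  rintro x ⟨k, hk, c, hc, hx⟩
  exact ⟨k, hk, c, fun i hi hik => pow_right_mono h i (hc i hi hik), hx⟩

theorem mem_integralClosureIdeal_of_monic_s8 [Nontrivial R] {J : Ideal R} {x : R} {P : R[X]}
    (hP : P.Monic) (hcoeff : ∀ i, P.coeff i ∈ J ^ (P.natDegree - i)) (hx : P.eval x = 0) :
    x ∈ integralClosureIdeal J := by
  set k := P.natDegree
  have hk : 1 ≤ k := by
    by_contra! h0
    rw [hP.natDegree_eq_zero.mp (Nat.lt_one_iff.mp h0), eval_one] at hx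
    exact one_ne_zero hx
  refine ⟨k, hk, fun i => P.coeff (k - i),
    fun i _ hik => by simpa [Nat.sub_sub_self hik] using hcoeff (k - i), ?_⟩
  rw [← hx, eval_eq_sum_range, sum_range_succ, hP.coeff_natDegree, one_mul, add_comm]
  congr 1
  refine sum_nbij' (fun i => k - i) (fun i => k - i) ?_ ?_ ?_ ?_ ?_ <;> intro i hi
  all_goals first | rfl | (simp only [mem_Icc, mem_range] at hi ⊢; omega)

theorem mem_integralClosureIdeal_of_mul_le [IsDomain R] {x : R} {J N : Ideal R} (hNfg : N.FG)
    (hN : N ≠ ⊥) (hx : ∀ y ∈ N, x * y ∈ J * N) : x ∈ integralClosureIdeal J := by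
  have : Module.Finite R N := Module.Finite.iff_fg.mpr hNfg
  obtain ⟨P, hP, -, hcoeff, hPx⟩ :=
    LinearMap.exists_monic_and_natDegree_eq_and_coeff_mem_pow_and_aeval_eq_zero R
      (Algebra.lsmul R R N x) J
      (by rintro _ ⟨y, rfl⟩; exact (Submodule.mem_smul_top_iff _ _ _).mpr (hx y y.2))
  refine mem_integralClosureIdeal_of_monic_s8 hP hcoeff ?_
  obtain ⟨y, hyN, hy0⟩ := (Submodule.ne_bot_iff N).mp hN
  have hPy : P.eval x * y = 0 := by
    simpa [aeval_algHom_apply] using congr_arg (fun f => (f ⟨y, hyN⟩ : R)) hPx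
  exact (mul_eq_zero.mp hPy).resolve_right hy0

namespace Ideal

theorem sup_pow_succ_le (J K : Ideal R) (n : ℕ) :
    (J ⊔ K) ^ (n + 1) ≤ J * (J ⊔ K) ^ n ⊔ K ^ (n + 1) := by
  induction n with
  | zero => simp
  | succ n ih =>
    calc (J ⊔ K) ^ (n + 2) = (J ⊔ K) ^ (n + 1) * (J ⊔ K) := by rw [pow_succ]
      _ ≤ (J * (J ⊔ K) ^ n ⊔ K ^ (n + 1)) * (J ⊔ K) := mul_mono_left ih
      _ = J * (J ⊔ K) ^ (n + 1) ⊔ (K ^ (n + 1) * J ⊔ K ^ (n + 2)) := by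
        rw [sup_mul, mul_assoc, ← pow_succ, mul_sup, ← pow_succ]
      _ ≤ J * (J ⊔ K) ^ (n + 1) ⊔ K ^ (n + 2) := by
        refine sup_le le_sup_left (sup_le (le_sup_of_le_left ?_) le_sup_right)
        rw [mul_comm]
        exact mul_mono_right (pow_right_mono le_sup_right _)

def IsReduction (J L : Ideal R) : Prop :=
  J ≤ L ∧ ∃ n : ℕ, L ^ (n + 1) ≤ J * L ^ n

theorem IsReduction.trans {A B C : Ideal R} (hAB : IsReduction A B) (hBC : IsReduction B C) :
    IsReduction A C := by
  obtain ⟨hAB, m, hm⟩ := hAB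
  obtain ⟨hBC, n, hn⟩ := hBC
  have key : ∀ t, C ^ (n + 1 + t) ≤ B ^ (t + 1) * C ^ n := by
    intro t
    induction t with
    | zero => simpa using hn
    | succ t ih =>
      calc C ^ (n + 1 + (t + 1)) = C ^ (n + 1 + t) * C := pow_succ _ _
        _ ≤ B ^ (t + 1) * C ^ n * C := mul_mono_left ih
        _ = B ^ (t + 1) * C ^ (n + 1) := by rw [mul_assoc, ← pow_succ]
        _ ≤ B ^ (t + 1) * (B * C ^ n) := mul_mono_right hn
        _ = B ^ (t + 2) * C ^ n := by rw [← mul_assoc, ← pow_succ]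
  refine ⟨hAB.trans hBC, m + n, ?_⟩
  calc C ^ (m + n + 1) = C ^ (n + 1 + m) := by ring_nf
    _ ≤ B ^ (m + 1) * C ^ n := key m
    _ ≤ A * B ^ m * C ^ n := mul_mono_left hm
    _ ≤ A * C ^ m * C ^ n := mul_mono_left (mul_mono_right (pow_right_mono hBC m))
    _ = A * C ^ (m + n) := by rw [mul_assoc, ← pow_add]

theorem isReduction_sup_span_singleton {J : Ideal R} {z : R} (hz : z ∈ integralClosureIdeal J) :
    IsReduction J (J ⊔ span {z}) := by
  obtain ⟨k, hk, c, hc, hzk⟩ := hz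
  obtain ⟨n, rfl⟩ : ∃ n, k = n + 1 := ⟨k - 1, by omega⟩
  set L := J ⊔ span {z}
  have hJL : J ≤ L := le_sup_left
  have hzL : z ∈ L := mem_sup_right (mem_span_singleton_self z)
  refine ⟨hJL, n, (sup_pow_succ_le J _ n).trans (sup_le le_rfl ?_)⟩
  rw [span_singleton_pow, span_singleton_le_iff_mem, eq_neg_of_add_eq_zero_left hzk]
  refine neg_mem (Submodule.sum_mem _ fun i hi => ?_)
  obtain ⟨hi, hin⟩ := mem_Icc.mp hi
  obtain ⟨j, rfl⟩ : ∃ j, i = j + 1 := ⟨i - 1, by omega⟩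
  have hle : J ^ (j + 1) * L ^ (n - j) ≤ J * L ^ n :=
    calc J ^ (j + 1) * L ^ (n - j) = J * (J ^ j * L ^ (n - j)) := by rw [pow_succ', mul_assoc]
      _ ≤ J * (L ^ j * L ^ (n - j)) := mul_mono_right (mul_mono_left (pow_right_mono hJL j))
      _ = J * L ^ n := by rw [← pow_add, Nat.add_sub_cancel' (by omega)]
  exact hle (by simpa using mul_mem_mul (hc _ hi hin) (pow_mem_pow hzL (n - j)))

theorem isReduction_sup_of_fg {J K : Ideal R} (hK : K.FG)
    (hKJ : (K : Set R) ⊆ integralClosureIdeal J) : IsReduction J (J ⊔ K) := by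
  classical
  obtain ⟨S, rfl⟩ := hK
  induction S using Finset.induction_on with
  | empty => exact ⟨by simp, 0, by simp⟩
  | insert z S _ ih =>
    rw [coe_insert, span_insert] at hKJ ⊢
    have hz := hKJ (mem_sup_left (mem_span_singleton_self z))
    have hS := ih fun y hy => hKJ (mem_sup_right hy)
    rw [← sup_assoc, sup_right_comm]
    exact hS.trans (isReduction_sup_span_singleton (integralClosureIdeal_mono le_sup_left hz))

end Ideal

theorem subset_integralClosureIdeal_of_mul_subset [IsDomain R] [IsNoetherianRing R]
    {J K N : Ideal R} (hN : N ≠ ⊥)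
    (h : ((K * N : Ideal R) : Set R) ⊆ integralClosureIdeal (J * N)) :
    (K : Set R) ⊆ integralClosureIdeal J := by
  intro x hx
  obtain rfl | hx0 := eq_or_ne x 0
  · exact zero_mem_integralClosureIdeal J
  obtain ⟨-, n, hn⟩ := isReduction_sup_of_fg (IsNoetherian.noetherian _) h
  set L := J * N ⊔ K * N
  have hL : L ≠ ⊥ := by
    have hK : K ≠ ⊥ := fun hK => hx0 (by simpa [hK] using hx)
    exact ne_bot_of_le_ne_bot (mul_ne_zero hK hN) le_sup_right
  refine mem_integralClosureIdeal_of_mul_le (IsNoetherian.noetherian _)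
    (mul_ne_zero hN (pow_ne_zero n hL)) fun y hy => ?_
  have hKNL : K * N * L ^ n ≤ J * (N * L ^ n) :=
    calc K * N * L ^ n ≤ L * L ^ n := mul_mono_left le_sup_right
      _ = L ^ (n + 1) := (pow_succ' L n).symm
      _ ≤ J * N * L ^ n := hn
      _ = J * (N * L ^ n) := mul_assoc _ _ _
  exact hKNL (by rw [mul_assoc]; exact mul_mem_mul hx hy)

end

theorem cancellation_maximalIdeal_general
    {R : Type*} [CommRing R] [IsDomain R] [IsNoetherianRing R] [IsLocalRing R]
    (hm : maximalIdeal R ≠ ⊥) (I : Ideal R) (p q : ℕ)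
    (hpq : q ≤ p)
    (h : ((maximalIdeal R ^ p : Ideal R) : Set R) ⊆ integralClosureIdeal ((maximalIdeal R * I) ^ q)) :
    ((maximalIdeal R ^ (p - q) : Ideal R) : Set R) ⊆ integralClosureIdeal (I ^ q) := by
  refine subset_integralClosureIdeal_of_mul_subset (pow_ne_zero q hm) ?_
  rwa [← pow_add, Nat.sub_add_cancel hpq, ← mul_pow, mul_comm I]

theorem cancellation_maximalIdeal
    {R : Type*} [CommRing R] [IsDomain R] [IsNoetherianRing R] [IsLocalRing R]
    (hm : maximalIdeal R ≠ ⊥) (I : Ideal R) (hI : I ≠ ⊤) (p q : ℕ)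
    (hq : 1 ≤ q) (hpq : q ≤ p)
    (h : ((maximalIdeal R ^ p : Ideal R) : Set R) ⊆ integralClosureIdeal ((maximalIdeal R * I) ^ q)) :
    ((maximalIdeal R ^ (p - q) : Ideal R) : Set R) ⊆ integralClosureIdeal (I ^ q) :=
  cancellation_maximalIdeal_general hm I p q hpq h
end

section
/- Let n ≥ 1 and let a_1, …, a_n be real numbers with 0 < a_1 ≤ a_2 ≤ ⋯ ≤ a_n. Then (1 + a_1)(1 + a_2)⋯(1 + a_n) ≥ 1 + Σ_{i=1}^{n} C(n, i)·a_1·a_2⋯a_i, where C(n, i) denotes the binomial coefficient; moreover, equality holds if and only if a_1 = a_2 = ⋯ = a_n. -/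
open Finset

private lemma icc_sum (f : ℕ → ℝ) (n : ℕ) :
    ∑ i ∈ Finset.Icc 1 n, f i = ∑ k ∈ Finset.range n, f (k + 1) := by
  rw [← Finset.Ico_add_one_right_eq_Icc, Finset.sum_Ico_eq_sum_range]
  apply Finset.sum_congr (by norm_num) fun k _ => by rw [Nat.add_comm]

private lemma icc_prod (f : ℕ → ℝ) (n : ℕ) :
    ∏ i ∈ Finset.Icc 1 n, f i = ∏ k ∈ Finset.range n, f (k + 1) := by
  rw [← Finset.Ico_add_one_right_eq_Icc, Finset.prod_Ico_eq_prod_range]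
  apply Finset.prod_congr (by norm_num) fun k _ => by rw [Nat.add_comm]

private lemma chain_mono (a : ℕ → ℝ) (n : ℕ)
    (hmono : ∀ i, 1 ≤ i → i < n → a i ≤ a (i + 1)) :
    ∀ j, j ≤ n → ∀ i, 1 ≤ i → i ≤ j → a i ≤ a j := by
  intro j
  induction j with
  | zero => intro _ i hi hij; omega
  | succ m ih =>
    intro hjn i hi hij
    rcases Nat.lt_or_ge i (m + 1) with h | h
    · calc a i ≤ a m := ih (by omega) i hi (by omega)
        _ ≤ a (m + 1) := hmono m (by omega) (by omega)
    · have : i = m + 1 := by omega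
      subst this; exact le_refl _

private lemma binom_expand (x : ℝ) (m : ℕ) :
    (1 + x) ^ m = 1 + ∑ k ∈ Finset.range m, (m.choose (k + 1) : ℝ) * x ^ (k + 1) := by
  rw [add_comm 1 x, add_pow, Finset.sum_range_succ']
  simp [one_pow, mul_comm, add_comm]

private lemma eq_case (a : ℕ → ℝ) (m : ℕ) (h : ∀ k ∈ Finset.range m, a (k + 1) = a 1) :
    ∏ k ∈ Finset.range m, (1 + a (k + 1)) =
      1 + ∑ k ∈ Finset.range m, (m.choose (k + 1) : ℝ) * ∏ j ∈ Finset.range (k + 1), a (j + 1) := by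
  have hp : ∀ k ∈ Finset.range m, (∏ j ∈ Finset.range (k + 1), a (j + 1)) = a 1 ^ (k + 1) := by
    intro k hk
    rw [Finset.mem_range] at hk
    have hc : ∀ j ∈ Finset.range (k + 1), a (j + 1) = a 1 := by
      intro j hj
      rw [Finset.mem_range] at hj
      exact h j (Finset.mem_range.mpr (by omega))
    rw [Finset.prod_congr rfl hc, Finset.prod_const, Finset.card_range]
  rw [Finset.prod_congr rfl (fun k hk => by rw [h k hk]), Finset.prod_const, Finset.card_range,
    binom_expand]
  congr 1
  exact Finset.sum_congr rfl fun k hk => by rw [hp k hk]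

private lemma aux (a : ℕ → ℝ) (ha1 : 0 < a 1) :
    ∀ n : ℕ, (∀ i, 1 ≤ i → i < n + 1 → a i ≤ a (i + 1)) →
    (1 + ∑ k ∈ Finset.range (n + 1), ((n + 1).choose (k + 1) : ℝ) *
        ∏ j ∈ Finset.range (k + 1), a (j + 1)
      ≤ ∏ k ∈ Finset.range (n + 1), (1 + a (k + 1)))
    ∧ ((∏ k ∈ Finset.range (n + 1), (1 + a (k + 1)) =
        1 + ∑ k ∈ Finset.range (n + 1), ((n + 1).choose (k + 1) : ℝ) *
          ∏ j ∈ Finset.range (k + 1), a (j + 1))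
      ↔ ∀ k ∈ Finset.range (n + 1), a (k + 1) = a 1) := by
  intro n
  induction n with
  | zero =>
    intro _
    constructor
    · simp
    · constructor
      · intro _ k hk
        simp at hk
        simp [hk]
      · intro _
        simp
  | succ n ih =>
    intro hmono
    have hmono' : ∀ i, 1 ≤ i → i < n + 1 → a i ≤ a (i + 1) := fun i hi hin =>
      hmono i hi (by omega)
    obtain ⟨ihle, iheq⟩ := ih hmono'
    have hchain := chain_mono a (n + 2) hmono
    have hle : ∀ i, 1 ≤ i → i ≤ n + 2 → a 1 ≤ a i := fun i hi hin =>
      hchain i hin 1 le_rfl hi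
    have hpos : ∀ i, 1 ≤ i → i ≤ n + 2 → 0 < a i := fun i hi hin =>
      lt_of_lt_of_le ha1 (hle i hi hin)
    set p : ℕ → ℝ := fun k => ∏ j ∈ Finset.range k, a (j + 1) with hp
    have hppos : ∀ k, k ≤ n + 2 → 0 < p k := by
      intro k hk
      apply Finset.prod_pos
      intro j hj
      rw [Finset.mem_range] at hj
      exact hpos (j + 1) (by omega) (by omega)
    set T : ℕ → ℝ := fun m => ∑ k ∈ Finset.range m, (m.choose (k + 1) : ℝ) * p (k + 1) with hT
    set P : ℕ → ℝ := fun m => ∏ k ∈ Finset.range m, (1 + a (k + 1)) with hP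
    -- key identity : T (n+2) = A + T (n+1)
    have hA : T (n + 2) = (∑ k ∈ Finset.range (n + 2), ((n + 1).choose k : ℝ) * (p k * a (k + 1)))
        + T (n + 1) := by
      have h1 : T (n + 2) = ∑ k ∈ Finset.range (n + 2),
          (((n + 1).choose k : ℝ) + ((n + 1).choose (k + 1) : ℝ)) * p (k + 1) := by
        apply Finset.sum_congr rfl
        intro k _
        rw [show (n + 2).choose (k + 1) = (n + 1).choose k + (n + 1).choose (k + 1) from
          Nat.choose_succ_succ (n + 1) k]
        push_cast
        ring
      rw [h1]
      have h2 : ∀ k, p (k + 1) = p k * a (k + 1) := by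
        intro k
        simp only [hp]
        rw [Finset.prod_range_succ]
      simp only [add_mul]
      rw [Finset.sum_add_distrib]
      congr 1
      · exact Finset.sum_congr rfl fun k _ => by rw [h2]
      · rw [Finset.sum_range_succ, Nat.choose_succ_self]
        simp [hT]
    have hTsum : 1 + T (n + 1) = ∑ k ∈ Finset.range (n + 2), ((n + 1).choose k : ℝ) * p k := by
      rw [Finset.sum_range_succ']
      simp [hT, hp, add_comm]
    -- D := a(n+2)(1+T(n+1)) - A  as a sum of nonneg terms
    have hD : a (n + 2) * (1 + T (n + 1)) -
        (∑ k ∈ Finset.range (n + 2), ((n + 1).choose k : ℝ) * (p k * a (k + 1)))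
        = ∑ k ∈ Finset.range (n + 2), ((n + 1).choose k : ℝ) * p k * (a (n + 2) - a (k + 1)) := by
      rw [hTsum, Finset.mul_sum, ← Finset.sum_sub_distrib]
      exact Finset.sum_congr rfl fun k _ => by ring
    have hterm : ∀ k ∈ Finset.range (n + 2),
        0 ≤ ((n + 1).choose k : ℝ) * p k * (a (n + 2) - a (k + 1)) := by
      intro k hk
      rw [Finset.mem_range] at hk
      apply mul_nonneg (mul_nonneg (by positivity) (le_of_lt (hppos k (by omega))))
      have := hchain (n + 2) le_rfl (k + 1) (by omega) (by omega)
      linarith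
    have hDge : (a (n + 2) - a 1) ≤ ∑ k ∈ Finset.range (n + 2),
        ((n + 1).choose k : ℝ) * p k * (a (n + 2) - a (k + 1)) := by
      have h0 : ((n + 1).choose 0 : ℝ) * p 0 * (a (n + 2) - a (0 + 1)) = a (n + 2) - a 1 := by
        simp [hp]
      rw [← h0]
      exact Finset.single_le_sum hterm (Finset.mem_range.mpr (by omega))
    have hDnn : 0 ≤ ∑ k ∈ Finset.range (n + 2),
        ((n + 1).choose k : ℝ) * p k * (a (n + 2) - a (k + 1)) :=
      Finset.sum_nonneg hterm
    have hPsplit : P (n + 2) = P (n + 1) * (1 + a (n + 2)) := by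
      simp only [hP]
      rw [Finset.prod_range_succ]
    have hapos : 0 < 1 + a (n + 2) := by
      have := hpos (n + 2) (by omega) le_rfl; linarith
    have hE : 0 ≤ P (n + 1) - (1 + T (n + 1)) := by
      have := ihle; simp only [hP, hT, hp] at *; linarith
    have hmain : P (n + 2) - (1 + T (n + 2)) =
        (1 + a (n + 2)) * (P (n + 1) - (1 + T (n + 1))) +
        (a (n + 2) * (1 + T (n + 1)) -
          ∑ k ∈ Finset.range (n + 2), ((n + 1).choose k : ℝ) * (p k * a (k + 1))) := by
      rw [hPsplit, hA]; ring
    have hEprod : 0 ≤ (1 + a (n + 2)) * (P (n + 1) - (1 + T (n + 1))) :=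
      mul_nonneg (le_of_lt hapos) hE
    have hineq : 1 + T (n + 2) ≤ P (n + 2) := by
      rw [hD] at hmain; linarith
    constructor
    · exact hineq
    · constructor
      · intro heq
        have heq' : P (n + 2) - (1 + T (n + 2)) = 0 := by
          simp only [hP, hT, hp] at heq ⊢; linarith
        have han2 : a (n + 2) = a 1 := by
          rw [hD] at hmain
          have := hle (n + 2) (by omega) le_rfl
          linarith
        intro k hk
        rw [Finset.mem_range] at hk
        have h1 := hle (k + 1) (by omega) (by omega)
        have h2 := hchain (n + 2) le_rfl (k + 1) (by omega) (by omega)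
        linarith
      · intro hall
        exact eq_case a (n + 2) hall

theorem one_add_prod_ge_binomial_sum (n : ℕ) (hn : 1 ≤ n) (a : ℕ → ℝ)
    (ha1 : 0 < a 1) (hmono : ∀ i, 1 ≤ i → i < n → a i ≤ a (i + 1)) :
    1 + ∑ i ∈ Finset.Icc 1 n, (n.choose i : ℝ) * ∏ j ∈ Finset.Icc 1 i, a j ≤
      ∏ i ∈ Finset.Icc 1 n, (1 + a i) ∧
    ((∏ i ∈ Finset.Icc 1 n, (1 + a i) =
        1 + ∑ i ∈ Finset.Icc 1 n, (n.choose i : ℝ) * ∏ j ∈ Finset.Icc 1 i, a j) ↔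
      ∀ i ∈ Finset.Icc 1 n, a i = a 1) := by
  obtain ⟨m, rfl⟩ : ∃ m, n = m + 1 := ⟨n - 1, by omega⟩
  have key := aux a ha1 m hmono
  have hsum : ∑ i ∈ Finset.Icc 1 (m + 1), ((m + 1).choose i : ℝ) * ∏ j ∈ Finset.Icc 1 i, a j
      = ∑ k ∈ Finset.range (m + 1), ((m + 1).choose (k + 1) : ℝ) *
          ∏ j ∈ Finset.range (k + 1), a (j + 1) := by
    rw [icc_sum]
    exact Finset.sum_congr rfl fun k _ => by rw [icc_prod]
  have hprod : ∏ i ∈ Finset.Icc 1 (m + 1), (1 + a i)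
      = ∏ k ∈ Finset.range (m + 1), (1 + a (k + 1)) := icc_prod _ _
  rw [hsum, hprod]
  refine ⟨key.1, key.2.trans ?_⟩
  constructor
  · intro h i hi
    rw [Finset.mem_Icc] at hi
    obtain ⟨k, rfl⟩ : ∃ k, i = k + 1 := ⟨i - 1, by omega⟩
    exact h k (Finset.mem_range.mpr (by omega))
  · intro h k hk
    rw [Finset.mem_range] at hk
    exact h (k + 1) (Finset.mem_Icc.mpr (by omega))
end

section
/- Let n, k be positive integers and consider on ℂ^n the function h_k(x) = Σ_{α ∈ ℕ^n, α_1+⋯+α_n = k} |x_1|^{2α_1}⋯|x_n|^{2α_n} (the sum of the squared moduli of all monomials of degree k). Then for a real number s ≥ 0, the function x ↦ h_k(x)^{−s} is integrable on some neighborhood of 0 in ℂ^n (with respect to Lebesgue measure on ℂ^n ≅ ℝ^{2n}) if and only if s < n/k; consequently, sup { s ≥ 0 : x ↦ h_k(x)^{−s} is integrable near 0 } = n/k, i.e. the log canonical threshold of the k-th power of the maximal ideal of convergent power series equals n/k. -/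
open MeasureTheory Finset

/-- `h k x = ∑_{|α| = k} |x^α|²`, the sum of squared moduli of all monomials of degree `k`. -/
noncomputable def monomialSumSq (n k : ℕ) (x : Fin n → ℂ) : ℝ :=
  ∑ α ∈ Finset.Nat.antidiagonalTuple n k, ∏ i, ‖x i‖ ^ (2 * α i)

/-!
With `‖x‖` the sup norm, `h_k(x)` is squeezed between `‖x‖ ^ (2k)` (the monomial `x_j ^ k` of a
largest coordinate) and `N · ‖x‖ ^ (2k)`, `N` the number of monomials. Hence `h_k ^ (-s)` is
comparable to `‖x‖ ^ (-2ks)`, which by polar coordinates is integrable near `0` in real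
dimension `2n` exactly when `-2n < -2ks`.
-/

open Asymptotics Filter Metric Topology

theorem Asymptotics.IsTheta.integrableAtFilter_iff {α E F : Type*} [MeasurableSpace α]
    [NormedAddCommGroup E] [NormedAddCommGroup F] {f : α → E} {g : α → F} {l : Filter α}
    {μ : Measure α} [l.IsMeasurablyGenerated] (h : f =Θ[l] g)
    (hf : StronglyMeasurableAtFilter f l μ) (hg : StronglyMeasurableAtFilter g l μ) :
    IntegrableAtFilter f l μ ↔ IntegrableAtFilter g l μ :=
  ⟨h.isBigO_symm.integrableAtFilter hg, h.isBigO.integrableAtFilter hf⟩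

section NormRpow

variable {E : Type*} [NormedAddCommGroup E] [NormedSpace ℝ E] [FiniteDimensional ℝ E]
  [Nontrivial E] [MeasurableSpace E] [BorelSpace E] (μ : Measure E) [μ.IsAddHaarMeasure]

theorem integrableOn_ball_norm_rpow_iff {R r : ℝ} (hR : 0 < R) :
    IntegrableOn (fun x : E => ‖x‖ ^ r) (ball 0 R) μ ↔ -(Module.finrank ℝ E : ℝ) < r := by
  have hd : 1 ≤ Module.finrank ℝ E := Module.finrank_pos
  rw [integrableOn_fun_norm_addHaar μ (f := fun y => y ^ r),
    integrableOn_congr_fun (g := fun y : ℝ => y ^ ((Module.finrank ℝ E : ℝ) - 1 + r))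
      (fun y hy => ?_) measurableSet_Ioo,
    intervalIntegral.integrableOn_Ioo_rpow_iff hR]
  · constructor <;> intro <;> linarith
  · dsimp only
    rw [smul_eq_mul, Real.rpow_add hy.1, ← Real.rpow_natCast, Nat.cast_sub hd, Nat.cast_one]

theorem integrableAtFilter_nhds_zero_norm_rpow_iff {r : ℝ} :
    IntegrableAtFilter (fun x : E => ‖x‖ ^ r) (𝓝 0) μ ↔ -(Module.finrank ℝ E : ℝ) < r := by
  constructor
  · rintro ⟨U, hU, hInt⟩
    obtain ⟨ε, hε, hball⟩ := Metric.mem_nhds_iff.1 hU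
    exact (integrableOn_ball_norm_rpow_iff μ hε).1 (hInt.mono_set hball)
  · exact fun hr => ⟨ball 0 1, ball_mem_nhds _ one_pos,
      (integrableOn_ball_norm_rpow_iff μ one_pos).2 hr⟩

end NormRpow

theorem Pi.exists_norm_apply_eq_norm {ι β : Type*} [Fintype ι] [Nonempty ι]
    [SeminormedAddCommGroup β] (x : ι → β) : ∃ i, ‖x i‖ = ‖x‖ := by
  obtain ⟨i, -, hi⟩ := Finset.exists_mem_eq_sup univ univ_nonempty fun i => ‖x i‖₊
  exact ⟨i, by rw [Pi.norm_def, hi]; rfl⟩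

section MonomialSumSq

variable {n k : ℕ}

theorem monomialSumSq_nonneg (x : Fin n → ℂ) : 0 ≤ monomialSumSq n k x := by
  unfold monomialSumSq; positivity

theorem continuous_monomialSumSq : Continuous (monomialSumSq n k) := by
  unfold monomialSumSq; fun_prop

theorem pow_norm_le_monomialSumSq [NeZero n] (x : Fin n → ℂ) :
    ‖x‖ ^ (2 * k) ≤ monomialSumSq n k x := by
  obtain ⟨j, hj⟩ := Pi.exists_norm_apply_eq_norm x
  have hmem : Pi.single j k ∈ Finset.Nat.antidiagonalTuple n k :=
    Finset.Nat.mem_antidiagonalTuple.2 (by simp)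
  calc ‖x‖ ^ (2 * k) = ∏ i, ‖x i‖ ^ (2 * Pi.single j k i) := by
        rw [Finset.prod_eq_single j (fun i _ hi => by simp [Pi.single_eq_of_ne hi]) (by simp)]
        simp [hj]
    _ ≤ monomialSumSq n k x :=
        Finset.single_le_sum (f := fun α : Fin n → ℕ => ∏ i, ‖x i‖ ^ (2 * α i))
          (fun _ _ => by positivity) hmem

theorem monomialSumSq_le_card_mul_pow_norm (x : Fin n → ℂ) :
    monomialSumSq n k x ≤ #(Finset.Nat.antidiagonalTuple n k) * ‖x‖ ^ (2 * k) := by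
  rw [← nsmul_eq_mul]
  refine Finset.sum_le_card_nsmul _ _ _ fun α hα => ?_
  calc ∏ i, ‖x i‖ ^ (2 * α i) ≤ ∏ i, ‖x‖ ^ (2 * α i) :=
        Finset.prod_le_prod (fun _ _ => by positivity)
          (fun i _ => pow_le_pow_left₀ (norm_nonneg _) (norm_le_pi_norm x i) _)
    _ = ‖x‖ ^ (2 * k) := by
        rw [Finset.prod_pow_eq_pow_sum, ← Finset.mul_sum, Finset.Nat.mem_antidiagonalTuple.1 hα]

theorem isTheta_monomialSumSq_pow_norm [NeZero n] :
    monomialSumSq n k =Θ[⊤] fun x => ‖x‖ ^ (2 * k) := by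
  refine ⟨IsBigO.of_bound #(Finset.Nat.antidiagonalTuple n k) ?_, IsBigO.of_bound 1 ?_⟩
  all_goals
    refine Eventually.of_forall fun x => ?_
    simp only [Real.norm_eq_abs, abs_pow, abs_norm, abs_of_nonneg (monomialSumSq_nonneg x)]
  · exact monomialSumSq_le_card_mul_pow_norm x
  · simpa using pow_norm_le_monomialSumSq x

theorem integrableAtFilter_monomialSumSq_rpow_neg_iff (hn : 0 < n) (hk : 0 < k) (s : ℝ) :
    IntegrableAtFilter (fun x => monomialSumSq n k x ^ (-s)) (𝓝 0) ↔ s < n / k := by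
  have : NeZero n := ⟨hn.ne'⟩
  have hfinrank : Module.finrank ℝ (Fin n → ℂ) = 2 * n := by
    simp [Module.finrank_pi_fintype, Complex.finrank_real_complex, mul_comm]
  have hΘ : (fun x => monomialSumSq n k x ^ (-s)) =Θ[𝓝 0] fun x => ‖x‖ ^ (2 * k * -s) := by
    refine ((isTheta_monomialSumSq_pow_norm.mono (le_top : 𝓝 (0 : Fin n → ℂ) ≤ ⊤)).rpow
      (Eventually.of_forall monomialSumSq_nonneg)
      (Eventually.of_forall fun x => by positivity)).trans_eventuallyEq
      (Eventually.of_forall fun x => ?_)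
    simp only
    rw [← Real.rpow_natCast, ← Real.rpow_mul (norm_nonneg x)]
    push_cast; rfl
  rw [hΘ.integrableAtFilter_iff, integrableAtFilter_nhds_zero_norm_rpow_iff, hfinrank,
    lt_div_iff₀ (by exact_mod_cast hk)]
  · push_cast; constructor <;> intro <;> linarith
  · exact (continuous_monomialSumSq.measurable.pow_const _).aestronglyMeasurable
      |>.stronglyMeasurableAtFilter
  · exact (by fun_prop : Measurable fun x : Fin n → ℂ => ‖x‖ ^ (2 * k * -s))
      |>.aestronglyMeasurable.stronglyMeasurableAtFilter

end MonomialSumSq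

theorem lct_pow_maximalIdeal (n k : ℕ) (hn : 0 < n) (hk : 0 < k) :
    (∀ s : ℝ, 0 ≤ s →
      ((∃ U ∈ nhds (0 : Fin n → ℂ),
          IntegrableOn (fun x => (monomialSumSq n k x) ^ (-s)) U volume) ↔
        s < (n : ℝ) / (k : ℝ))) ∧
    sSup {s : ℝ | 0 ≤ s ∧ ∃ U ∈ nhds (0 : Fin n → ℂ),
        IntegrableOn (fun x => (monomialSumSq n k x) ^ (-s)) U volume} =
      (n : ℝ) / (k : ℝ) := by
  have hiff := integrableAtFilter_monomialSumSq_rpow_neg_iff hn hk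
  have hset : {s : ℝ | 0 ≤ s ∧ ∃ U ∈ nhds (0 : Fin n → ℂ),
      IntegrableOn (fun x => (monomialSumSq n k x) ^ (-s)) U volume} = Set.Ico 0 ((n : ℝ) / k) :=
    Set.ext fun s => and_congr_right fun _ => hiff s
  exact ⟨fun s _ => hiff s, by rw [hset, csSup_Ico (by positivity)]⟩
end
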